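/- arXiv:1402.5705 — 2 statements merged into one kernel-verified Lean document; each statement's English description precedes it below -/
import Mathlib

section
/- For a, b ∈ {1, 2, 3} with a ≠ b and ε ∈ {1, −1}, θ_b(H_a(ε)) = H_a(−ε). -/
open RealInnerProductSpace

/-- An almost contact metric structure `(φ, ξ, η)` together with an almost contact metric
3-structure `(φ_a, ξ_a, η_a)`, `a ∈ {1,2,3}` (indices mod 3), on a real inner product space `V`,
modelling the structures induced on the tangent space of a real hypersurface in the complex
two-plane Grassmannian `G₂(ℂ^{m+2})` by the Kaehler structure `J` and the quaternionic Kaehler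
structure `𝔍`.  Here `η(X) = ⟪ξ, X⟫` and `η_a(X) = ⟪ξ_a, X⟫` are written out via the inner
product. -/
structure ACMS3 (V : Type*) [NormedAddCommGroup V] [InnerProductSpace ℝ V] where
  phi : V →ₗ[ℝ] V
  xi : V
  phiA : Fin 3 → V →ₗ[ℝ] V
  xiA : Fin 3 → V
  xi_unit : ‖xi‖ = 1
  phi_sq : ∀ X : V, phi (phi X) = -X + ⟪xi, X⟫ • xi
  phi_xi : phi xi = 0
  phi_metric : ∀ X Y : V, ⟪phi X, phi Y⟫ = ⟪X, Y⟫ - ⟪xi, X⟫ * ⟪xi, Y⟫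
  xiA_unit : ∀ a, ‖xiA a‖ = 1
  phiA_sq : ∀ a (X : V), phiA a (phiA a X) = -X + ⟪xiA a, X⟫ • xiA a
  phiA_xiA : ∀ a, phiA a (xiA a) = 0
  phiA_metric : ∀ a (X Y : V),
    ⟪phiA a X, phiA a Y⟫ = ⟪X, Y⟫ - ⟪xiA a, X⟫ * ⟪xiA a, Y⟫
  quat1 : ∀ a (X : V), phiA a (phiA (a + 1) X) - ⟪xiA (a + 1), X⟫ • xiA a = phiA (a + 2) X
  quat2 : ∀ a (X : V),
    phiA (a + 2) X = -(phiA (a + 1) (phiA a X)) + ⟪xiA a, X⟫ • xiA (a + 1)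
  quat_xi1 : ∀ a, phiA a (xiA (a + 1)) = xiA (a + 2)
  quat_xi2 : ∀ a, xiA (a + 2) = -(phiA (a + 1) (xiA a))
  rel : ∀ a (X : V), phiA a (phi X) - ⟪xi, X⟫ • xiA a = phi (phiA a X) - ⟪xiA a, X⟫ • xi
  rel_xi : ∀ a, phi (xiA a) = phiA a xi

variable {V : Type*} [NormedAddCommGroup V] [InnerProductSpace ℝ V]

/-- The endomorphism `θ_a X := φ_a φ X − η(X) ξ_a`. -/
noncomputable def ACMS3.theta (S : ACMS3 V) (a : Fin 3) : V →ₗ[ℝ] V where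
  toFun X := S.phiA a (S.phi X) - ⟪S.xi, X⟫ • S.xiA a
  map_add' X Y := by
    simp only [map_add, inner_add_right, add_smul]
    abel
  map_smul' r X := by
    simp only [map_smul, inner_smul_right, RingHom.id_apply, smul_sub, smul_smul]

/-- `H^⊥ = span{ξ, ξ₁, ξ₂, ξ₃, φξ₁, φξ₂, φξ₃}`. -/
noncomputable def ACMS3.Hperp (S : ACMS3 V) : Submodule ℝ V :=
  Submodule.span ℝ {S.xi, S.xiA 0, S.xiA 1, S.xiA 2,
    S.phi (S.xiA 0), S.phi (S.xiA 1), S.phi (S.xiA 2)}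

/-- `H` is the orthogonal complement of `H^⊥` in `V`. -/
noncomputable def ACMS3.H (S : ACMS3 V) : Submodule ℝ V := S.Hperpᗮ

/-- `H_a(ε)`, the eigenspace of `θ_a` restricted to `H` corresponding to the eigenvalue `ε`. -/
noncomputable def ACMS3.eigenH (S : ACMS3 V) (a : Fin 3) (ε : ℝ) : Submodule ℝ V :=
  S.H ⊓ Module.End.eigenspace (S.theta a) ε

/-- The normal Jacobi operator
`R̂_N X = X + 3η(X)ξ + Σ_a (3η_a(X)ξ_a − η(ξ_a)θ_a X + η_a(φX)φξ_a)`. -/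
noncomputable def ACMS3.jacobi (S : ACMS3 V) (X : V) : V :=
  X + (3 * ⟪S.xi, X⟫) • S.xi +
    ∑ a : Fin 3, ((3 * ⟪S.xiA a, X⟫) • S.xiA a
      - ⟪S.xi, S.xiA a⟫ • S.theta a X
      + ⟪S.xiA a, S.phi X⟫ • S.phi (S.xiA a))

/-!
On `H` all the `η`-terms of the structure equations vanish: `φ` and the `φ_a` are skew-adjoint
and preserve `H^⊥`, hence preserve `H`, and there `θ_b = φ_b φ`, `φ φ_b = φ_b φ`, `φ² = φ_b² = -1`
and `φ_a φ_b = -φ_b φ_a` for `a ≠ b`. So `θ_b` is an involution of `H` anticommuting with `θ_a`,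
and such an involution swaps the `ε`- and `(-ε)`-eigenspaces of `θ_a`.
-/

lemma fin_three_eq_or_eq_add_one_or_eq_add_two (a b : Fin 3) :
    b = a ∨ b = a + 1 ∨ b = a + 2 := by
  revert a b; decide

theorem Submodule.apply_mem_orthogonal_of_skew {f : V →ₗ[ℝ] V}
    (hf : ∀ x y, ⟪f x, y⟫ = -⟪x, f y⟫) {K : Submodule ℝ V} (hK : ∀ x ∈ K, f x ∈ K)
    {x : V} (hx : x ∈ Kᗮ) : f x ∈ Kᗮ := by
  rw [Submodule.mem_orthogonal] at hx ⊢
  intro y hy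
  rw [real_inner_comm, hf, real_inner_comm, hx (f y) (hK y hy), neg_zero]

section AlmostContact

variable {f : V →ₗ[ℝ] V} {u : V}

theorem inner_apply_eq_zero_of_sq_eq (hu : u ≠ 0)
    (hsq : ∀ X, f (f X) = -X + ⟪u, X⟫ • u) (hfu : f u = 0) (X : V) : ⟪u, f X⟫ = 0 := by
  have hcube : f (f (f X)) = -f X := by
    rw [hsq X, map_add, map_neg, map_smul, hfu, smul_zero, add_zero]
  have hsmul : ⟪u, f X⟫ • u = 0 := by
    simpa [hcube] using (hsq (f X)).symm
  exact (smul_eq_zero.mp hsmul).resolve_right hu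

theorem inner_apply_left_eq_neg_of_sq_eq (hu : u ≠ 0)
    (hsq : ∀ X, f (f X) = -X + ⟪u, X⟫ • u) (hfu : f u = 0)
    (hmetric : ∀ X Y, ⟪f X, f Y⟫ = ⟪X, Y⟫ - ⟪u, X⟫ * ⟪u, Y⟫) (X Y : V) :
    ⟪f X, Y⟫ = -⟪X, f Y⟫ := by
  have hη := inner_apply_eq_zero_of_sq_eq hu hsq hfu
  calc ⟪f X, Y⟫ = ⟪f X, -f (f Y) + ⟪u, Y⟫ • u⟫ := by rw [hsq Y]; congr 1; abel
    _ = -⟪f X, f (f Y)⟫ + ⟪u, Y⟫ * ⟪f X, u⟫ := by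
      rw [inner_add_right, inner_neg_right, real_inner_smul_right]
    _ = -⟪X, f Y⟫ := by rw [hmetric, hη, real_inner_comm u (f X), hη]; ring

end AlmostContact

namespace Module.End

variable {R M : Type*} [CommRing R] [AddCommGroup M] [Module R M]

theorem map_inf_eigenspace_of_anticomm {A B : Module.End R M} {H : Submodule R M}
    (hBH : ∀ x ∈ H, B x ∈ H) (hBB : ∀ x ∈ H, B (B x) = x)
    (hAB : ∀ x ∈ H, A (B x) = -B (A x)) (μ : R) :
    (H ⊓ eigenspace A μ).map B = H ⊓ eigenspace A (-μ) := by
  apply le_antisymm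
  · rintro _ ⟨y, ⟨hyH, hyμ⟩, rfl⟩
    rw [SetLike.mem_coe, mem_eigenspace_iff] at hyμ
    refine ⟨hBH y hyH, mem_eigenspace_iff.mpr ?_⟩
    rw [hAB y hyH, hyμ, map_smul, neg_smul]
  · rintro x ⟨hxH, hxμ⟩
    rw [SetLike.mem_coe, mem_eigenspace_iff] at hxμ
    refine ⟨B x, ⟨hBH x hxH, mem_eigenspace_iff.mpr ?_⟩, hBB x hxH⟩
    rw [hAB x hxH, hxμ, map_smul, neg_smul, neg_neg]

end Module.End

namespace ACMS3

variable (S : ACMS3 V)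

lemma xi_ne_zero : S.xi ≠ 0 := norm_ne_zero_iff.mp (by rw [S.xi_unit]; exact one_ne_zero)

lemma xiA_ne_zero (a : Fin 3) : S.xiA a ≠ 0 :=
  norm_ne_zero_iff.mp (by rw [S.xiA_unit]; exact one_ne_zero)

lemma inner_phi_left (X Y : V) : ⟪S.phi X, Y⟫ = -⟪X, S.phi Y⟫ :=
  inner_apply_left_eq_neg_of_sq_eq S.xi_ne_zero S.phi_sq S.phi_xi S.phi_metric X Y

lemma inner_phiA_left (a : Fin 3) (X Y : V) : ⟪S.phiA a X, Y⟫ = -⟪X, S.phiA a Y⟫ :=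
  inner_apply_left_eq_neg_of_sq_eq (S.xiA_ne_zero a) (S.phiA_sq a) (S.phiA_xiA a)
    (S.phiA_metric a) X Y

lemma xi_mem_Hperp : S.xi ∈ S.Hperp := Submodule.subset_span (by simp)

lemma xiA_mem_Hperp (c : Fin 3) : S.xiA c ∈ S.Hperp := by
  fin_cases c <;> exact Submodule.subset_span (by simp)

lemma phi_xiA_mem_Hperp (c : Fin 3) : S.phi (S.xiA c) ∈ S.Hperp := by
  fin_cases c <;> exact Submodule.subset_span (by simp)

lemma phiA_xiA_mem_Hperp (b c : Fin 3) : S.phiA b (S.xiA c) ∈ S.Hperp := by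
  rcases fin_three_eq_or_eq_add_one_or_eq_add_two b c with rfl | rfl | rfl
  · rw [S.phiA_xiA]; exact zero_mem _
  · rw [S.quat_xi1]; exact S.xiA_mem_Hperp _
  · -- `ξ_{b+1} = -φ_b ξ_{b+2}` is the relation `quat_xi2` at index `b + 2`
    have h := S.quat_xi2 (b + 2)
    rw [show b + 2 + 2 = b + 1 by omega, show b + 2 + 1 = b by omega] at h
    rw [← neg_neg (S.phiA b _), ← h]
    exact neg_mem (S.xiA_mem_Hperp _)

lemma phi_mem_Hperp {X : V} (hX : X ∈ S.Hperp) : S.phi X ∈ S.Hperp := by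
  suffices S.Hperp ≤ S.Hperp.comap S.phi from this hX
  refine Submodule.span_le.mpr ?_
  simp only [Set.insert_subset_iff, Set.singleton_subset_iff, SetLike.mem_coe,
    Submodule.mem_comap, S.phi_xi, S.phi_sq]
  refine ⟨zero_mem _, S.phi_xiA_mem_Hperp 0, S.phi_xiA_mem_Hperp 1, S.phi_xiA_mem_Hperp 2,
    ?_, ?_, ?_⟩ <;>
  exact add_mem (neg_mem (S.xiA_mem_Hperp _)) (Submodule.smul_mem _ _ S.xi_mem_Hperp)

lemma phiA_phi_xiA_mem_Hperp (b c : Fin 3) : S.phiA b (S.phi (S.xiA c)) ∈ S.Hperp := by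
  rw [← sub_add_cancel (S.phiA b _) (⟪S.xi, S.xiA c⟫ • S.xiA b), S.rel]
  exact add_mem (sub_mem (S.phi_mem_Hperp (S.phiA_xiA_mem_Hperp b c))
    (Submodule.smul_mem _ _ S.xi_mem_Hperp)) (Submodule.smul_mem _ _ (S.xiA_mem_Hperp b))

lemma phiA_mem_Hperp (b : Fin 3) {X : V} (hX : X ∈ S.Hperp) : S.phiA b X ∈ S.Hperp := by
  suffices S.Hperp ≤ S.Hperp.comap (S.phiA b) from this hX
  refine Submodule.span_le.mpr ?_
  simp only [Set.insert_subset_iff, Set.singleton_subset_iff, SetLike.mem_coe,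
    Submodule.mem_comap, ← S.rel_xi]
  exact ⟨S.phi_xiA_mem_Hperp b, S.phiA_xiA_mem_Hperp b 0, S.phiA_xiA_mem_Hperp b 1,
    S.phiA_xiA_mem_Hperp b 2, S.phiA_phi_xiA_mem_Hperp b 0, S.phiA_phi_xiA_mem_Hperp b 1,
    S.phiA_phi_xiA_mem_Hperp b 2⟩

lemma inner_eq_zero_of_mem_H {X : V} (hX : X ∈ S.H) {w : V} (hw : w ∈ S.Hperp) :
    ⟪w, X⟫ = 0 :=
  (Submodule.mem_orthogonal _ _).mp hX w hw

lemma phi_mem_H {X : V} (hX : X ∈ S.H) : S.phi X ∈ S.H :=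
  Submodule.apply_mem_orthogonal_of_skew S.inner_phi_left (fun _ ↦ S.phi_mem_Hperp) hX

lemma phiA_mem_H (b : Fin 3) {X : V} (hX : X ∈ S.H) : S.phiA b X ∈ S.H :=
  Submodule.apply_mem_orthogonal_of_skew (S.inner_phiA_left b) (fun _ ↦ S.phiA_mem_Hperp b) hX

lemma theta_of_mem_H (b : Fin 3) {X : V} (hX : X ∈ S.H) :
    S.theta b X = S.phiA b (S.phi X) := by
  rw [theta, LinearMap.coe_mk, AddHom.coe_mk, S.inner_eq_zero_of_mem_H hX S.xi_mem_Hperp,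
    zero_smul, sub_zero]

lemma theta_mem_H (b : Fin 3) {X : V} (hX : X ∈ S.H) : S.theta b X ∈ S.H := by
  rw [S.theta_of_mem_H b hX]
  exact S.phiA_mem_H b (S.phi_mem_H hX)

lemma phi_phi_of_mem_H {X : V} (hX : X ∈ S.H) : S.phi (S.phi X) = -X := by
  rw [S.phi_sq, S.inner_eq_zero_of_mem_H hX S.xi_mem_Hperp, zero_smul, add_zero]

lemma phiA_phiA_of_mem_H (b : Fin 3) {X : V} (hX : X ∈ S.H) : S.phiA b (S.phiA b X) = -X := by
  rw [S.phiA_sq, S.inner_eq_zero_of_mem_H hX (S.xiA_mem_Hperp b), zero_smul, add_zero]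

lemma phi_phiA_of_mem_H (b : Fin 3) {X : V} (hX : X ∈ S.H) :
    S.phi (S.phiA b X) = S.phiA b (S.phi X) := by
  simpa only [S.inner_eq_zero_of_mem_H hX S.xi_mem_Hperp,
    S.inner_eq_zero_of_mem_H hX (S.xiA_mem_Hperp b), zero_smul, sub_zero] using (S.rel b X).symm

lemma phiA_add_one_anticomm_of_mem_H (c : Fin 3) {X : V} (hX : X ∈ S.H) :
    S.phiA c (S.phiA (c + 1) X) = -S.phiA (c + 1) (S.phiA c X) := by
  have h1 := S.quat1 c X
  have h2 := S.quat2 c X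
  rw [S.inner_eq_zero_of_mem_H hX (S.xiA_mem_Hperp _), zero_smul, sub_zero] at h1
  rw [S.inner_eq_zero_of_mem_H hX (S.xiA_mem_Hperp _), zero_smul, add_zero] at h2
  rw [h1, h2]

lemma phiA_anticomm_of_mem_H {a b : Fin 3} (hab : a ≠ b) {X : V} (hX : X ∈ S.H) :
    S.phiA a (S.phiA b X) = -S.phiA b (S.phiA a X) := by
  rcases fin_three_eq_or_eq_add_one_or_eq_add_two a b with rfl | rfl | rfl
  · exact absurd rfl hab
  · exact S.phiA_add_one_anticomm_of_mem_H a hX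
  · have h := S.phiA_add_one_anticomm_of_mem_H (a + 2) hX
    rw [show a + 2 + 1 = a by omega] at h
    rw [h, neg_neg]

lemma theta_theta_of_mem_H (c d : Fin 3) {X : V} (hX : X ∈ S.H) :
    S.theta c (S.theta d X) = -S.phiA c (S.phiA d X) := by
  have hφX : S.phi X ∈ S.H := S.phi_mem_H hX
  rw [S.theta_of_mem_H c (S.theta_mem_H d hX), S.theta_of_mem_H d hX,
    S.phi_phiA_of_mem_H d hφX, S.phi_phi_of_mem_H hX, map_neg, map_neg]

end ACMS3

theorem eigenH_theta_map_general (S : ACMS3 V) (a b : Fin 3) (hab : a ≠ b)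
    (ε : ℝ) :
    (S.eigenH a ε).map (S.theta b) = S.eigenH a (-ε) :=
  Module.End.map_inf_eigenspace_of_anticomm (fun _ ↦ S.theta_mem_H b)
    (fun x hx ↦ by rw [S.theta_theta_of_mem_H b b hx, S.phiA_phiA_of_mem_H b hx, neg_neg])
    (fun x hx ↦ by
      rw [S.theta_theta_of_mem_H a b hx, S.theta_theta_of_mem_H b a hx,
        S.phiA_anticomm_of_mem_H hab hx])
    ε

/-- For `a, b ∈ {1,2,3}` with `a ≠ b` and `ε ∈ {1,−1}`,
`θ_b(H_a(ε)) = H_a(−ε)`. -/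
theorem eigenH_theta_map [FiniteDimensional ℝ V] (S : ACMS3 V) (a b : Fin 3) (hab : a ≠ b)
    (ε : ℝ) (hε : ε = 1 ∨ ε = -1) :
    (S.eigenH a ε).map (S.theta b) = S.eigenH a (-ε) :=
  eigenH_theta_map_general S a b hab ε
end

section
/- Assume η(ξ_a) = 0 for all a ∈ {1, 2, 3}. Then the normal Jacobi operator R̂_N has exactly the eigenvalues 0, 4 and 1, with corresponding eigenspaces T₀ = span{φξ₁, φξ₂, φξ₃}, T₄ = span{ξ, ξ₁, ξ₂, ξ₃} and T₁ = H, and V is the orthogonal direct sum T₀ ⊕ T₄ ⊕ T₁ (assuming H ≠ 0). -/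
open RealInnerProductSpace

variable {V : Type*} [NormedAddCommGroup V] [InnerProductSpace ℝ V]

/-! Under `η(ξ_a) = 0` the seven vectors `ξ, ξ_a, φξ_a` are orthonormal: the only non-obvious
products are `⟪ξ_a, φξ_b⟫ = ⟪ξ_a, φ_b ξ⟫ = -⟪φ_b ξ_a, ξ⟫`, and `φ_b ξ_a` is `0` or `±ξ_c`.
The `θ_a`-terms of `R̂_N` vanish, and skewness of `φ` turns the rest into `R̂_N = 1 - P₀ + 3 P₄`,
where `P₀`, `P₄` are the orthogonal projections onto `T₀ = span{φξ_a}` and `T₄ = span{ξ, ξ_a}`;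
moreover `H = (T₀ ⊕ T₄)ᗮ`. An operator `1 + a P + b Q` with `P`, `Q` the projections onto
orthogonal subspaces acts as `1 + a`, `1 + b` and `1` on the three summands, and projecting an
eigenvector onto them shows that it has no other eigenvalues. -/

open Submodule

section Projections

variable {E : Type*} [NormedAddCommGroup E] [InnerProductSpace ℝ E]

instance Submodule.hasOrthogonalProjection_span_of_finite {s : Set E} [Finite s] :
    (span ℝ s).HasOrthogonalProjection :=
  haveI := FiniteDimensional.span_of_finite ℝ (Set.toFinite s)
  inferInstance

theorem Orthonormal.starProjection_eq_sum {ι : Type*} [Fintype ι] {e : ι → E}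
    (he : Orthonormal ℝ e) {K : Submodule ℝ E} [K.HasOrthogonalProjection]
    (hK : span ℝ (Set.range e) = K) (x : E) :
    K.starProjection x = ∑ i, ⟪e i, x⟫ • e i := by
  subst hK
  refine eq_starProjection_of_mem_orthogonal
    (sum_mem fun i _ => smul_mem _ _ (subset_span ⟨i, rfl⟩)) ?_
  have hperp : ∀ i, ⟪e i, x - ∑ j, ⟪e j, x⟫ • e j⟫ = 0 := fun i => by
    rw [inner_sub_right, he.inner_right_fintype, sub_self]
  exact isOrtho_iff_le.1 (isOrtho_span.2 (by rintro _ ⟨i, rfl⟩ _ rfl; exact hperp i)).symm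
    (subset_span rfl)

variable (K L : Submodule ℝ E) [K.HasOrthogonalProjection] [L.HasOrthogonalProjection]

noncomputable def Submodule.shiftByProjections (a b : ℝ) (x : E) : E :=
  x + a • K.starProjection x + b • L.starProjection x

variable {K L} {a b : ℝ} {x : E}

theorem Submodule.IsOrtho.shiftByProjections_of_mem_left (hKL : K ⟂ L) (hx : x ∈ K) :
    shiftByProjections K L a b x = (1 + a) • x := by
  rw [shiftByProjections, starProjection_eq_self_iff.2 hx,
    (starProjection_apply_eq_zero_iff L).2 (isOrtho_iff_le.1 hKL hx)]
  module

theorem Submodule.IsOrtho.shiftByProjections_of_mem_right (hKL : K ⟂ L) (hx : x ∈ L) :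
    shiftByProjections K L a b x = (1 + b) • x := by
  rw [shiftByProjections, starProjection_eq_self_iff.2 hx,
    (starProjection_apply_eq_zero_iff K).2 (isOrtho_iff_le.1 hKL.symm hx)]
  module

theorem Submodule.shiftByProjections_of_mem_orthogonal (hK : x ∈ Kᗮ) (hL : x ∈ Lᗮ) :
    shiftByProjections K L a b x = x := by
  rw [shiftByProjections, (starProjection_apply_eq_zero_iff K).2 hK,
    (starProjection_apply_eq_zero_iff L).2 hL]
  module

theorem Submodule.shiftByProjections_comm (x : E) :
    shiftByProjections K L a b x = shiftByProjections L K b a x :=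
  add_right_comm _ _ _

theorem Submodule.IsOrtho.starProjection_shiftByProjections (hKL : K ⟂ L) (x : E) :
    K.starProjection (shiftByProjections K L a b x) = (1 + a) • K.starProjection x := by
  have hLK : K.starProjection (L.starProjection x) = 0 :=
    (starProjection_apply_eq_zero_iff K).2 <|
      isOrtho_iff_le.1 hKL.symm (L.starProjection_apply_mem x)
  rw [shiftByProjections, map_add, map_add, map_smul, map_smul, hLK,
    starProjection_eq_self_iff.2 (K.starProjection_apply_mem x)]
  module

theorem Submodule.IsOrtho.eigenvalue_shiftByProjections (hKL : K ⟂ L) (hx : x ≠ 0) {μ : ℝ}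
    (hμ : shiftByProjections K L a b x = μ • x) : μ = 1 + a ∨ μ = 1 + b ∨ μ = 1 := by
  have hK : (μ - (1 + a)) • K.starProjection x = 0 := by
    rw [sub_smul, ← hKL.starProjection_shiftByProjections, hμ, map_smul, sub_self]
  have hL : (μ - (1 + b)) • L.starProjection x = 0 := by
    rw [sub_smul, ← hKL.symm.starProjection_shiftByProjections, ← shiftByProjections_comm, hμ,
      map_smul, sub_self]
  by_contra! hne
  obtain ⟨ha, hb, h1⟩ := hne
  have hKx := (smul_eq_zero.1 hK).resolve_left (sub_ne_zero.2 ha)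
  have hLx := (smul_eq_zero.1 hL).resolve_left (sub_ne_zero.2 hb)
  have h1x : (μ - 1) • x = 0 := by
    rw [sub_smul, one_smul, ← hμ, shiftByProjections, hKx, hLx]
    module
  exact h1 (sub_eq_zero.1 ((smul_eq_zero.1 h1x).resolve_right hx))

end Projections

section AlmostContact

variable {E : Type*} [NormedAddCommGroup E] [InnerProductSpace ℝ E]

structure IsAlmostContactMetric (φ : E →ₗ[ℝ] E) (ξ : E) : Prop where
  norm_xi : ‖ξ‖ = 1
  apply_apply : ∀ X, φ (φ X) = -X + ⟪ξ, X⟫ • ξ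
  apply_xi : φ ξ = 0
  inner_apply_apply : ∀ X Y, ⟪φ X, φ Y⟫ = ⟪X, Y⟫ - ⟪ξ, X⟫ * ⟪ξ, Y⟫

namespace IsAlmostContactMetric

variable {φ : E →ₗ[ℝ] E} {ξ : E} (hφ : IsAlmostContactMetric φ ξ)
include hφ

/-- Comparing the two expansions of `φ³ Y` gives `η(φ Y) ξ = η(Y) φ ξ = 0`. -/
theorem inner_xi_apply (Y : E) : ⟪ξ, φ Y⟫ = 0 := by
  have h3 := hφ.apply_apply (φ Y)
  rw [hφ.apply_apply Y, map_add, map_neg, map_smul, hφ.apply_xi, smul_zero, add_zero,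
    left_eq_add] at h3
  exact (smul_eq_zero.1 h3).resolve_right (norm_ne_zero_iff.1 (by simp [hφ.norm_xi]))

theorem inner_apply_left (X Y : E) : ⟪φ X, Y⟫ = -⟪X, φ Y⟫ := by
  have h := hφ.inner_apply_apply X (φ Y)
  rw [hφ.apply_apply, inner_add_right, inner_neg_right, real_inner_smul_right, real_inner_comm ξ,
    hφ.inner_xi_apply, hφ.inner_xi_apply] at h
  linarith

theorem inner_apply_self (X : E) : ⟪X, φ X⟫ = 0 := by
  have h := hφ.inner_apply_left X X
  rw [real_inner_comm] at h
  linarith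

theorem orthonormal_comp {ι : Type*} {v : ι → E} (hv : Orthonormal ℝ v)
    (hξv : ∀ i, ⟪ξ, v i⟫ = 0) : Orthonormal ℝ (φ ∘ v) := by
  classical
  rw [orthonormal_iff_ite] at hv ⊢
  intro i j
  simp only [Function.comp_apply, hφ.inner_apply_apply, hξv, mul_zero, sub_zero, hv]

end IsAlmostContactMetric

end AlmostContact

namespace ACMS3

variable (S : ACMS3 V)

theorem isAlmostContactMetric : IsAlmostContactMetric S.phi S.xi :=
  ⟨S.xi_unit, S.phi_sq, S.phi_xi, S.phi_metric⟩

theorem isAlmostContactMetric_phiA (a : Fin 3) : IsAlmostContactMetric (S.phiA a) (S.xiA a) :=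
  ⟨S.xiA_unit a, S.phiA_sq a, S.phiA_xiA a, S.phiA_metric a⟩

theorem phiA_xiA_add_two (a : Fin 3) : S.phiA a (S.xiA (a + 2)) = -S.xiA (a + 1) := by
  have h := S.quat_xi2 (a + 2)
  have h22 : ∀ c : Fin 3, c + 2 + 2 = c + 1 := by decide
  have h21 : ∀ c : Fin 3, c + 2 + 1 = c := by decide
  rw [h22, h21] at h
  rw [h, neg_neg]

theorem orthonormal_xiA : Orthonormal ℝ S.xiA := by
  have hnext : ∀ c : Fin 3, ⟪S.xiA (c + 1), S.xiA (c + 2)⟫ = 0 := fun c => by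
    rw [← S.quat_xi1 c]
    exact (S.isAlmostContactMetric_phiA c).inner_apply_self _
  refine ⟨S.xiA_unit, fun a b hab => ?_⟩
  obtain ⟨c, ⟨rfl, rfl⟩ | ⟨rfl, rfl⟩⟩ :
      ∃ c : Fin 3, a = c + 1 ∧ b = c + 2 ∨ a = c + 2 ∧ b = c + 1 := by
    revert a b; decide
  · exact hnext c
  · rw [real_inner_comm]; exact hnext c

variable {S} (h : ∀ a, ⟪S.xi, S.xiA a⟫ = 0)
include h

theorem inner_xiA_phi_xiA (a b : Fin 3) : ⟪S.xiA a, S.phi (S.xiA b)⟫ = 0 := by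
  rw [S.rel_xi, ← neg_eq_zero, ← (S.isAlmostContactMetric_phiA b).inner_apply_left,
    real_inner_comm]
  obtain rfl | rfl | rfl : a = b ∨ a = b + 1 ∨ a = b + 2 := by revert a b; decide
  · rw [S.phiA_xiA, inner_zero_right]
  · rw [S.quat_xi1, h]
  · rw [S.phiA_xiA_add_two, inner_neg_right, h, neg_zero]

theorem orthonormal_xi_xiA : Orthonormal ℝ (Matrix.vecCons S.xi S.xiA) :=
  orthonormal_vecCons_iff.2 ⟨S.xi_unit, h, S.orthonormal_xiA⟩

theorem orthonormal_phi_xiA : Orthonormal ℝ (S.phi ∘ S.xiA) :=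
  S.isAlmostContactMetric.orthonormal_comp S.orthonormal_xiA h

theorem isOrtho_span_phi_xiA_span_xi_xiA :
    span ℝ {S.phi (S.xiA 0), S.phi (S.xiA 1), S.phi (S.xiA 2)} ⟂
      span ℝ {S.xi, S.xiA 0, S.xiA 1, S.xiA 2} := by
  rw [isOrtho_span]
  rintro _ hu _ hv
  simp only [Set.mem_insert_iff, Set.mem_singleton_iff] at hu hv
  rcases hu with rfl | rfl | rfl <;> rcases hv with rfl | rfl | rfl | rfl <;> rw [real_inner_comm]
  all_goals first | exact S.isAlmostContactMetric.inner_xi_apply _ | exact inner_xiA_phi_xiA h _ _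

theorem jacobi_eq_shiftByProjections :
    S.jacobi = shiftByProjections (span ℝ {S.phi (S.xiA 0), S.phi (S.xiA 1), S.phi (S.xiA 2)})
      (span ℝ {S.xi, S.xiA 0, S.xiA 1, S.xiA 2}) (-1) 3 := by
  funext X
  rw [shiftByProjections, (orthonormal_phi_xiA h).starProjection_eq_sum
      (by congr 1; simp [Set.ext_iff, Fin.exists_fin_succ, eq_comm]),
    (orthonormal_xi_xiA h).starProjection_eq_sum
      (by congr 1; simp [Set.ext_iff, Fin.exists_fin_succ, eq_comm])]
  simp only [ACMS3.jacobi, h, zero_smul, sub_zero, Fin.sum_univ_succ (n := 3),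
    Fin.sum_univ_three, Matrix.cons_val_zero, Matrix.cons_val_succ, Function.comp_apply,
    S.isAlmostContactMetric.inner_apply_left]
  module

end ACMS3

theorem jacobi_eigen_decomposition_general (S : ACMS3 V)
    (h : ∀ a, ⟪S.xi, S.xiA a⟫ = 0) (hH : S.H ≠ ⊥) :
    (∀ X ∈ Submodule.span ℝ {S.phi (S.xiA 0), S.phi (S.xiA 1), S.phi (S.xiA 2)},
      S.jacobi X = 0) ∧
    (∀ X ∈ Submodule.span ℝ {S.xi, S.xiA 0, S.xiA 1, S.xiA 2}, S.jacobi X = (4 : ℝ) • X) ∧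
    (∀ X ∈ S.H, S.jacobi X = X) ∧
    (Submodule.span ℝ {S.phi (S.xiA 0), S.phi (S.xiA 1), S.phi (S.xiA 2)} ≠ ⊥ ∧
      Submodule.span ℝ {S.xi, S.xiA 0, S.xiA 1, S.xiA 2} ≠ ⊥ ∧ S.H ≠ ⊥) ∧
    (∀ (lam : ℝ) (X : V), X ≠ 0 → S.jacobi X = lam • X → lam = 0 ∨ lam = 4 ∨ lam = 1) ∧
    (∀ x ∈ Submodule.span ℝ {S.phi (S.xiA 0), S.phi (S.xiA 1), S.phi (S.xiA 2)},
      ∀ y ∈ Submodule.span ℝ {S.xi, S.xiA 0, S.xiA 1, S.xiA 2}, ⟪x, y⟫ = 0) ∧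
    (∀ x ∈ Submodule.span ℝ {S.phi (S.xiA 0), S.phi (S.xiA 1), S.phi (S.xiA 2)},
      ∀ z ∈ S.H, ⟪x, z⟫ = 0) ∧
    (∀ y ∈ Submodule.span ℝ {S.xi, S.xiA 0, S.xiA 1, S.xiA 2}, ∀ z ∈ S.H, ⟪y, z⟫ = 0) ∧
    Submodule.span ℝ {S.phi (S.xiA 0), S.phi (S.xiA 1), S.phi (S.xiA 2)} ⊔
      Submodule.span ℝ {S.xi, S.xiA 0, S.xiA 1, S.xiA 2} ⊔ S.H = ⊤ := by
  rw [ACMS3.jacobi_eq_shiftByProjections h]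
  set T₀ := span ℝ {S.phi (S.xiA 0), S.phi (S.xiA 1), S.phi (S.xiA 2)}
  set T₄ := span ℝ {S.xi, S.xiA 0, S.xiA 1, S.xiA 2}
  have hT : T₀ ⟂ T₄ := ACMS3.isOrtho_span_phi_xiA_span_xi_xiA h
  have hHperp : T₀ ⊔ T₄ = S.Hperp := by
    rw [← span_union, ACMS3.Hperp]
    congr 1
    ext
    simp only [Set.mem_union, Set.mem_insert_iff, Set.mem_singleton_iff]
    tauto
  have hT₀H : T₀ ⟂ S.H := (isOrtho_orthogonal_right _).mono_left (hHperp ▸ le_sup_left)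
  have hT₄H : T₄ ⟂ S.H := (isOrtho_orthogonal_right _).mono_left (hHperp ▸ le_sup_right)
  refine ⟨fun X hX => by rw [hT.shiftByProjections_of_mem_left hX]; norm_num,
    fun X hX => by rw [hT.shiftByProjections_of_mem_right hX]; norm_num,
    fun X hX => shiftByProjections_of_mem_orthogonal (hT₀H.symm hX) (hT₄H.symm hX),
    ⟨(Submodule.ne_bot_iff _).2
        ⟨_, subset_span (by simp), (ACMS3.orthonormal_phi_xiA h).ne_zero 0⟩,
      (Submodule.ne_bot_iff _).2
        ⟨_, subset_span (by simp), (ACMS3.orthonormal_xi_xiA h).ne_zero 0⟩, hH⟩,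
    fun μ X hX hμ => by convert hT.eigenvalue_shiftByProjections hX hμ using 3 <;> norm_num,
    isOrtho_iff_inner_eq.1 hT, isOrtho_iff_inner_eq.1 hT₀H, isOrtho_iff_inner_eq.1 hT₄H, ?_⟩
  rw [hHperp, ACMS3.H, ACMS3.Hperp]
  exact sup_orthogonal_of_hasOrthogonalProjection

/-- Assume `η(ξ_a) = 0` for all `a ∈ {1,2,3}`.  Then the normal Jacobi operator
`R̂_N` has exactly the eigenvalues `0`, `4` and `1`, with corresponding eigenspaces
`T₀ = span{φξ₁, φξ₂, φξ₃}`, `T₄ = span{ξ, ξ₁, ξ₂, ξ₃}` and `T₁ = H`, and `V` is the orthogonal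
direct sum `T₀ ⊕ T₄ ⊕ T₁` (assuming `H ≠ 0`). -/
theorem jacobi_eigen_decomposition [FiniteDimensional ℝ V] (S : ACMS3 V)
    (h : ∀ a, ⟪S.xi, S.xiA a⟫ = 0) (hH : S.H ≠ ⊥) :
    (∀ X ∈ Submodule.span ℝ {S.phi (S.xiA 0), S.phi (S.xiA 1), S.phi (S.xiA 2)},
      S.jacobi X = 0) ∧
    (∀ X ∈ Submodule.span ℝ {S.xi, S.xiA 0, S.xiA 1, S.xiA 2}, S.jacobi X = (4 : ℝ) • X) ∧
    (∀ X ∈ S.H, S.jacobi X = X) ∧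
    (Submodule.span ℝ {S.phi (S.xiA 0), S.phi (S.xiA 1), S.phi (S.xiA 2)} ≠ ⊥ ∧
      Submodule.span ℝ {S.xi, S.xiA 0, S.xiA 1, S.xiA 2} ≠ ⊥ ∧ S.H ≠ ⊥) ∧
    (∀ (lam : ℝ) (X : V), X ≠ 0 → S.jacobi X = lam • X → lam = 0 ∨ lam = 4 ∨ lam = 1) ∧
    (∀ x ∈ Submodule.span ℝ {S.phi (S.xiA 0), S.phi (S.xiA 1), S.phi (S.xiA 2)},
      ∀ y ∈ Submodule.span ℝ {S.xi, S.xiA 0, S.xiA 1, S.xiA 2}, ⟪x, y⟫ = 0) ∧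
    (∀ x ∈ Submodule.span ℝ {S.phi (S.xiA 0), S.phi (S.xiA 1), S.phi (S.xiA 2)},
      ∀ z ∈ S.H, ⟪x, z⟫ = 0) ∧
    (∀ y ∈ Submodule.span ℝ {S.xi, S.xiA 0, S.xiA 1, S.xiA 2}, ∀ z ∈ S.H, ⟪y, z⟫ = 0) ∧
    Submodule.span ℝ {S.phi (S.xiA 0), S.phi (S.xiA 1), S.phi (S.xiA 2)} ⊔
      Submodule.span ℝ {S.xi, S.xiA 0, S.xiA 1, S.xiA 2} ⊔ S.H = ⊤ :=
  jacobi_eigen_decomposition_general S h hH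
end
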